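/- In 1+1 Minkowski space with interval δs² = c²δt² - δx², let A = (0,0) and B = (δt, δx) with δt > 0 and c²δt² > δx² (time-like segment), and let δτ = (δs²/c²)/δt > 0 be the internal time of the segment [A,B]. Then for any sufficiently small t̃ with 0 < t̃ < δt, there exists a point H = (t̃, h) on the line of simultaneity t = t̃ such that the total internal time of the broken path [A,H] ∪ [H,B], namely ((c²t̃² - h²)/c²)/t̃ + ((c²(δt - t̃)² - (δx - h)²)/c²)/(δt - t̃), equals -δτ. -/

import Mathlib

/-!
Splitting `[0, t₁ + t₂]` at time `t₁` and completing the square in the position `h` of the break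
point shows that the total internal time of the broken path is the internal time of the straight
segment minus a nonnegative multiple of `(h - t₁ x / (t₁ + t₂))²`. As `h` varies it therefore takes
every value `≤ τ`, in particular `-τ` when `τ ≥ 0`, i.e. when the segment is time-like.
-/

/-- The internal time of the straight segment from the origin to `(t, x)`. -/
noncomputable def internalTime (c t x : ℝ) : ℝ := (c ^ 2 * t ^ 2 - x ^ 2) / c ^ 2 / t

theorem internalTime_nonneg {c t x : ℝ} (ht : 0 < t) (hx : x ^ 2 ≤ c ^ 2 * t ^ 2) :
    0 ≤ internalTime c t x :=
  div_nonneg (div_nonneg (sub_nonneg.2 hx) (sq_nonneg c)) ht.le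

theorem internalTime_add_internalTime {c t₁ t₂ : ℝ} (hc : c ≠ 0) (ht₁ : 0 < t₁) (ht₂ : 0 < t₂)
    (x h : ℝ) :
    internalTime c t₁ h + internalTime c t₂ (x - h) =
      internalTime c (t₁ + t₂) x -
        (t₁ + t₂) / (c ^ 2 * t₁ * t₂) * (h - t₁ * x / (t₁ + t₂)) ^ 2 := by
  unfold internalTime
  field_simp
  ring

theorem exists_internalTime_add_internalTime_eq {c t₁ t₂ : ℝ} (hc : c ≠ 0) (ht₁ : 0 < t₁)
    (ht₂ : 0 < t₂) (x : ℝ) {y : ℝ} (hy : y ≤ internalTime c (t₁ + t₂) x) :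
    ∃ h, internalTime c t₁ h + internalTime c t₂ (x - h) = y := by
  have hT : 0 < t₁ + t₂ := add_pos ht₁ ht₂
  set d := internalTime c (t₁ + t₂) x - y
  have hd : 0 ≤ d * (c ^ 2 * t₁ * t₂) / (t₁ + t₂) := by
    have : 0 ≤ d := sub_nonneg.2 hy
    positivity
  refine ⟨t₁ * x / (t₁ + t₂) + √(d * (c ^ 2 * t₁ * t₂) / (t₁ + t₂)), ?_⟩
  rw [internalTime_add_internalTime hc ht₁ ht₂, add_sub_cancel_left, Real.sq_sqrt hd]
  field_simp
  ring

theorem broken_path_inverts_internal_time_general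
    (c δt δx : ℝ) (hc : 0 < c) (htimelike : c^2 * δt^2 > δx^2)
    (δτ : ℝ) (hδτ : δτ = (c^2 * δt^2 - δx^2) / c^2 / δt) :
    ∃ ε > 0, ∀ t' : ℝ, 0 < t' → t' < ε → t' < δt →
      ∃ h : ℝ,
        (c^2 * t'^2 - h^2) / c^2 / t' +
          (c^2 * (δt - t')^2 - (δx - h)^2) / c^2 / (δt - t') = -δτ := by
  refine ⟨1, one_pos, fun t' ht' _ htδ => ?_⟩
  have hτ : 0 ≤ internalTime c δt δx := internalTime_nonneg (by linarith) htimelike.le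
  obtain ⟨h, hh⟩ := exists_internalTime_add_internalTime_eq (t₁ := t') (t₂ := δt - t') hc.ne' ht'
    (sub_pos.2 htδ) δx (y := -internalTime c δt δx) (by rw [add_sub_cancel]; linarith)
  exact ⟨h, hδτ ▸ hh⟩

/-- for a time-like segment from `A = (0,0)` to `B = (δt,δx)` in 1+1
Minkowski space, for any sufficiently small `0 < t̃ < δt` there is a point
`H = (t̃, h)` on the line of simultaneity `t = t̃` such that the total internal
time of the broken path `[A,H] ∪ [H,B]` equals `-δτ`. -/
theorem broken_path_inverts_internal_time
    (c δt δx : ℝ) (hc : 0 < c) (hδt : 0 < δt) (htimelike : c^2 * δt^2 > δx^2)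
    (δτ : ℝ) (hδτ : δτ = (c^2 * δt^2 - δx^2) / c^2 / δt) :
    ∃ ε > 0, ∀ t' : ℝ, 0 < t' → t' < ε → t' < δt →
      ∃ h : ℝ,
        (c^2 * t'^2 - h^2) / c^2 / t' +
          (c^2 * (δt - t')^2 - (δx - h)^2) / c^2 / (δt - t') = -δτ :=
  broken_path_inverts_internal_time_general c δt δx hc htimelike δτ hδτ
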